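/- In the two-qubit system with agents Alice and Bob, commands {R_x(θ), CNOT}, initial state |00⟩⟨00|, where Alice's R_x(θ) applies R_x(θ) ⊗ I, Bob's R_x(θ) applies I ⊗ R_x(θ), both agents' CNOT applies the controlled-NOT with the first qubit as control and the second as target, Alice's POVM set contains only the computational-basis measurement on the first qubit, and Bob's contains only the computational-basis measurement on the second qubit: Alice with the command R_x(θ) interferes with Bob by at least sin²(θ/2); i.e. Int({Alice}, {R_x(θ)} | {Bob}) ≥ sin²(θ/2). In particular, for 0 < θ < 2π, Int({Alice}, {R_x(θ)} | {Bob}) > 0. -/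

import Mathlib

open scoped Classical ComplexOrder
open Matrix Kronecker

noncomputable section

/-- A density operator: positive semidefinite with trace 1. -/
def IsDensity {d : Type} [Fintype d] [DecidableEq d] (ρ : Matrix d d ℂ) : Prop :=
  ρ.PosSemidef ∧ ρ.trace = 1

/-- A super-operator: a linear, positive, trace-preserving map on matrices. -/
def IsSuperOp {d : Type} [Fintype d] [DecidableEq d]
    (F : Matrix d d ℂ → Matrix d d ℂ) : Prop :=
  IsLinearMap ℂ F ∧ (∀ ρ : Matrix d d ℂ, ρ.PosSemidef → (F ρ).PosSemidef) ∧
    (∀ ρ : Matrix d d ℂ, (F ρ).trace = ρ.trace)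

/-- A finite family of matrices (the data of a measurement). -/
structure PMeas (d : Type) where
  m : ℕ
  E : Fin m → Matrix d d ℂ

/-- The family is a POVM: positive semidefinite elements summing to the identity. -/
def PMeas.IsPOVM {d : Type} [Fintype d] [DecidableEq d] (P : PMeas d) : Prop :=
  (∀ i, (P.E i).PosSemidef) ∧ ∑ i, P.E i = 1

/-- The distance between outcome distributions of a measurement on two states. -/
def dE {d : Type} [Fintype d] (P : PMeas d) (ρ σ : Matrix d d ℂ) : ℝ :=
  (1 / 2) * ∑ i, ‖(P.E i * ρ).trace - (P.E i * σ).trace‖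

/-- The measurement pseudo-distance induced by a set of measurements. -/
def dM {d : Type} [Fintype d] (M : Set (PMeas d)) (ρ σ : Matrix d d ℂ) : ℝ :=
  sSup { x | ∃ P ∈ M, x = dE P ρ σ }

/-- A quantum system: initial state, agents, commands, super-operators, measurements. -/
structure QSystem (Agent Cmd d : Type) where
  ρ0 : Matrix d d ℂ
  A : Set Agent
  C : Set Cmd
  Ecmd : Agent → Cmd → Matrix d d ℂ → Matrix d d ℂ
  M : Agent → Set (PMeas d)

/-- Well-formedness: the initial state is a density operator, commands act as
super-operators, and agents measure with POVMs. -/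
def QSystem.WellFormed {Agent Cmd d : Type} [Fintype d] [DecidableEq d]
    (S : QSystem Agent Cmd d) : Prop :=
  IsDensity S.ρ0 ∧ (∀ a ∈ S.A, ∀ c ∈ S.C, IsSuperOp (S.Ecmd a c)) ∧
    (∀ a ∈ S.A, ∀ P ∈ S.M a, P.IsPOVM)

/-- Execution of a finite action sequence (composition of super-operators, in order). -/
def QSystem.run {Agent Cmd d : Type} (S : QSystem Agent Cmd d)
    (α : List (Agent × Cmd)) (ρ : Matrix d d ℂ) : Matrix d d ℂ :=
  α.foldl (fun τ p => S.Ecmd p.1 p.2 τ) ρ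

/-- A sequence over A × C. -/
def QSystem.Valid {Agent Cmd d : Type} (S : QSystem Agent Cmd d)
    (α : List (Agent × Cmd)) : Prop :=
  ∀ p ∈ α, p.1 ∈ S.A ∧ p.2 ∈ S.C

/-- `purge G D α` deletes from `α` every pair `(a, c)` with `a ∈ G` and `c ∈ D`. -/
def purge {Agent Cmd : Type} (G : Set Agent) (D : Set Cmd) :
    List (Agent × Cmd) → List (Agent × Cmd)
  | [] => []
  | p :: rest => if p.1 ∈ G ∧ p.2 ∈ D then purge G D rest else p :: purge G D rest

/-- A reachable density operator. -/
def QSystem.Reachable {Agent Cmd d : Type} (S : QSystem Agent Cmd d)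
    (ρ : Matrix d d ℂ) : Prop :=
  ∃ α, S.Valid α ∧ S.run α S.ρ0 = ρ

/-- `∇ a`: the set of agents from which information may not flow to `a`. -/
def nabla {Agent : Type} (pol : Agent → Agent → Prop) (a : Agent) : Set Agent :=
  { b | ¬ pol b a }

/-- The security degree `K(𝕊,↝)`. -/
def Kdeg {Agent Cmd d : Type} [Fintype d] (S : QSystem Agent Cmd d)
    (pol : Agent → Agent → Prop) : ℝ :=
  sSup { x | ∃ a ∈ S.A, ∃ α, S.Valid α ∧
    x = dM (S.M a) (S.run α S.ρ0) (S.run (purge (nabla pol a) Set.univ α) S.ρ0) }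

/-- The `t`-bounded security degree `K_t(𝕊,↝)`. -/
def Kt {Agent Cmd d : Type} [Fintype d] (S : QSystem Agent Cmd d)
    (pol : Agent → Agent → Prop) (t : ℕ) : ℝ :=
  sSup { x | ∃ a ∈ S.A, ∃ α, S.Valid α ∧ α.length ≤ t ∧
    x = dM (S.M a) (S.run α S.ρ0) (S.run (purge (nabla pol a) Set.univ α) S.ρ0) }

/-- The interference degree `Int(G₁, D | G₂)`. -/
def IntDeg {Agent Cmd d : Type} [Fintype d] (S : QSystem Agent Cmd d)
    (G1 : Set Agent) (D : Set Cmd) (G2 : Set Agent) : ℝ :=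
  sSup { x | ∃ a ∈ G2, ∃ α, S.Valid α ∧
    x = dM (S.M a) (S.run α S.ρ0) (S.run (purge G1 D α) S.ρ0) }

/-- The square root of a positive semidefinite matrix, as `Matrix.PosSemidef.sqrt` was defined. -/
def psdSqrt {d : Type} [Fintype d] [DecidableEq d] {A : Matrix d d ℂ} (hA : A.PosSemidef) :
    Matrix d d ℂ :=
  (hA.1.eigenvectorUnitary : Matrix d d ℂ) * Matrix.diagonal ((↑) ∘ Real.sqrt ∘ hA.1.eigenvalues) *
    (star hA.1.eigenvectorUnitary : Matrix d d ℂ)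

/-- Trace distance `d(ρ,σ) = (1/2)·tr √((ρ−σ)†(ρ−σ))`. -/
def traceDist {d : Type} [Fintype d] [DecidableEq d] (ρ σ : Matrix d d ℂ) : ℝ :=
  (1 / 2) * ((psdSqrt (Matrix.posSemidef_conjTranspose_mul_self (ρ - σ))).trace).re

end
noncomputable section

/-- The two agents Alice and Bob. -/
inductive Ag : Type
  | alice : Ag
  | bob : Ag
deriving DecidableEq

/-- The two commands: the rotation `R_x(θ)` and the controlled-NOT. -/
inductive Cm : Type
  | rx : Cm
  | cnot : Cm
deriving DecidableEq

/-- The rotation about the x-axis of the Bloch sphere. -/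
def Rx (θ : ℝ) : Matrix (Fin 2) (Fin 2) ℂ :=
  !![(Real.cos (θ / 2) : ℂ), -Complex.I * (Real.sin (θ / 2) : ℂ);
     -Complex.I * (Real.sin (θ / 2) : ℂ), (Real.cos (θ / 2) : ℂ)]

/-- The controlled-NOT gate with the first qubit as control: `|i,k⟩ ↦ |i, k + i⟩`. -/
def CNOT : Matrix (Fin 2 × Fin 2) (Fin 2 × Fin 2) ℂ :=
  Matrix.of fun p q => if p.1 = q.1 ∧ p.2 = q.2 + q.1 then 1 else 0

/-- The super-operator `ρ ↦ U ρ U†` of a unitary `U`. -/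
def conjOp {d : Type} [Fintype d] (U : Matrix d d ℂ) :
    Matrix d d ℂ → Matrix d d ℂ :=
  fun ρ => U * ρ * Uᴴ

/-- The projection `|i⟩⟨i|` on one qubit. -/
def proj (i : Fin 2) : Matrix (Fin 2) (Fin 2) ℂ := Matrix.single i i 1

/-- The computational-basis measurement on the first qubit. -/
def measFst : PMeas (Fin 2 × Fin 2) where
  m := 2
  E := fun i => proj i ⊗ₖ (1 : Matrix (Fin 2) (Fin 2) ℂ)

/-- The computational-basis measurement on the second qubit. -/
def measSnd : PMeas (Fin 2 × Fin 2) where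
  m := 2
  E := fun i => (1 : Matrix (Fin 2) (Fin 2) ℂ) ⊗ₖ proj i

/-- The basis vector `|00⟩` of the two-qubit space. -/
def ket00 : (Fin 2 × Fin 2) → ℂ := fun p => if p = (0, 0) then 1 else 0

/-- The two-qubit system of Example 3.1: initial state `|00⟩⟨00|`; Alice's `R_x(θ)`
acts on the first qubit, Bob's on the second; both agents' CNOT has the first qubit as
control and the second as target; Alice measures the first qubit in the computational
basis, Bob the second. -/
def twoQubitSys (θ : ℝ) : QSystem Ag Cm (Fin 2 × Fin 2) where
  ρ0 := Matrix.vecMulVec ket00 (star ket00)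
  A := Set.univ
  C := Set.univ
  Ecmd := fun a c =>
    match a, c with
    | Ag.alice, Cm.rx => conjOp (Rx θ ⊗ₖ (1 : Matrix (Fin 2) (Fin 2) ℂ))
    | Ag.bob, Cm.rx => conjOp ((1 : Matrix (Fin 2) (Fin 2) ℂ) ⊗ₖ Rx θ)
    | _, Cm.cnot => conjOp CNOT
  M := fun a =>
    match a with
    | Ag.alice => {measFst}
    | Ag.bob => {measSnd}

end
noncomputable section

open scoped MatrixOrder

/-! Alice's `R_x(θ)` followed by CNOT turns `|00⟩` into `cos(θ/2)|00⟩ - i sin(θ/2)|11⟩`,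
whose second qubit reads `1` with probability `sin²(θ/2)`; purging the rotation leaves CNOT
acting on `|00⟩`, which it fixes. Bob's measurement therefore separates the two runs by
`sin²(θ/2)`. Since `IntDeg` is an `sSup` of reals (worth `0` on unbounded sets), the bound also
needs every such distance to be at most `1`: runs of a well-formed system stay density
operators, and a POVM cannot separate two density operators by more than `1`. -/

section Density

variable {d : Type} [Fintype d]

theorem conjOp_vecMulVec (U : Matrix d d ℂ) (v : d → ℂ) :
    conjOp U (vecMulVec v (star v)) = vecMulVec (U *ᵥ v) (star (U *ᵥ v)) := by
  rw [conjOp, mul_vecMulVec, vecMulVec_mul, star_mulVec]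

variable [DecidableEq d]

theorem IsSuperOp.isDensity {F : Matrix d d ℂ → Matrix d d ℂ} (hF : IsSuperOp F)
    {ρ : Matrix d d ℂ} (hρ : IsDensity ρ) : IsDensity (F ρ) :=
  ⟨hF.2.1 ρ hρ.1, (hF.2.2 ρ).trans hρ.2⟩

theorem isSuperOp_conjOp {U : Matrix d d ℂ} (hU : U ∈ unitary (Matrix d d ℂ)) :
    IsSuperOp (conjOp U) := by
  refine ⟨⟨fun ρ σ => ?_, fun c ρ => ?_⟩, fun ρ hρ => hρ.mul_mul_conjTranspose_same U,
    fun ρ => ?_⟩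
  · simp only [conjOp, mul_add, add_mul]
  · simp only [conjOp, mul_smul_comm, smul_mul_assoc]
  · rw [conjOp, trace_mul_cycle, ← star_eq_conjTranspose, Unitary.star_mul_self_of_mem hU,
      one_mul]

theorem isDensity_vecMulVec {v : d → ℂ} (hv : star v ⬝ᵥ v = 1) :
    IsDensity (vecMulVec v (star v)) :=
  ⟨posSemidef_vecMulVec_self_star v, by rw [trace_vecMulVec, dotProduct_comm, hv]⟩

end Density

section Measurement

variable {d : Type} [Fintype d] [DecidableEq d]

theorem Matrix.PosSemidef.trace_mul_nonneg {E ρ : Matrix d d ℂ} (hE : E.PosSemidef)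
    (hρ : ρ.PosSemidef) : 0 ≤ (E * ρ).trace := by
  obtain ⟨B, rfl⟩ := CStarAlgebra.nonneg_iff_eq_star_mul_self.mp hE.nonneg
  rw [mul_assoc, trace_mul_comm, star_eq_conjTranspose]
  exact (hρ.mul_mul_conjTranspose_same B).trace_nonneg

theorem PMeas.IsPOVM.sum_norm_trace_mul {P : PMeas d} (hP : P.IsPOVM) {ρ : Matrix d d ℂ}
    (hρ : IsDensity ρ) : ∑ i, ‖(P.E i * ρ).trace‖ = 1 := by
  have hsum : ∑ i, ((‖(P.E i * ρ).trace‖ : ℝ) : ℂ) = 1 := by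
    simp_rw [Complex.norm_of_nonneg' ((hP.1 _).trace_mul_nonneg hρ.1), ← trace_sum,
      ← Finset.sum_mul, hP.2, one_mul, hρ.2]
  exact_mod_cast hsum

theorem PMeas.IsPOVM.dE_le_one {P : PMeas d} (hP : P.IsPOVM) {ρ σ : Matrix d d ℂ}
    (hρ : IsDensity ρ) (hσ : IsDensity σ) : dE P ρ σ ≤ 1 := by
  have hle : ∑ i, ‖(P.E i * ρ).trace - (P.E i * σ).trace‖ ≤ 2 := by
    calc ∑ i, ‖(P.E i * ρ).trace - (P.E i * σ).trace‖
        ≤ ∑ i, (‖(P.E i * ρ).trace‖ + ‖(P.E i * σ).trace‖) :=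
          Finset.sum_le_sum fun i _ => norm_sub_le _ _
      _ = 2 := by
          rw [Finset.sum_add_distrib, hP.sum_norm_trace_mul hρ, hP.sum_norm_trace_mul hσ]
          norm_num
  rw [dE]
  linarith

theorem dM_le_one {M : Set (PMeas d)} (hM : ∀ P ∈ M, P.IsPOVM) {ρ σ : Matrix d d ℂ}
    (hρ : IsDensity ρ) (hσ : IsDensity σ) : dM M ρ σ ≤ 1 :=
  Real.sSup_le (fun _ ⟨P, hP, hx⟩ => hx ▸ (hM P hP).dE_le_one hρ hσ) zero_le_one

end Measurement

theorem dM_singleton {d : Type} [Fintype d] (P : PMeas d) (ρ σ : Matrix d d ℂ) :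
    dM {P} ρ σ = dE P ρ σ := by
  simp [dM]

theorem purge_sublist {Agent Cmd : Type} (G : Set Agent) (D : Set Cmd)
    (α : List (Agent × Cmd)) : (purge G D α).Sublist α := by
  induction α with
  | nil => exact .slnil
  | cons p α ih =>
    rw [purge]
    split_ifs
    · exact ih.cons p
    · exact ih.cons_cons p

namespace QSystem

variable {Agent Cmd d : Type} {S : QSystem Agent Cmd d}

theorem Valid.purge {α : List (Agent × Cmd)} (hα : S.Valid α) (G : Set Agent) (D : Set Cmd) :
    S.Valid (_root_.purge G D α) :=
  fun p hp => hα p ((purge_sublist G D α).subset hp)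

variable [Fintype d] [DecidableEq d]

theorem WellFormed.isDensity_run (hS : S.WellFormed) {α : List (Agent × Cmd)}
    (hα : S.Valid α) {ρ : Matrix d d ℂ} (hρ : IsDensity ρ) : IsDensity (S.run α ρ) := by
  induction α generalizing ρ with
  | nil => exact hρ
  | cons p α ih =>
    have hp := hα p List.mem_cons_self
    exact ih (fun q hq => hα q (List.mem_cons_of_mem p hq)) ((hS.2.1 _ hp.1 _ hp.2).isDensity hρ)

theorem WellFormed.dM_le_intDeg (hS : S.WellFormed) {G₂ : Set Agent} (hG₂ : G₂ ⊆ S.A)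
    (G₁ : Set Agent) (D : Set Cmd) {a : Agent} (ha : a ∈ G₂) {α : List (Agent × Cmd)}
    (hα : S.Valid α) :
    dM (S.M a) (S.run α S.ρ0) (S.run (purge G₁ D α) S.ρ0) ≤ IntDeg S G₁ D G₂ := by
  refine le_csSup ⟨1, ?_⟩ ⟨a, ha, α, hα, rfl⟩
  rintro _ ⟨b, hb, β, hβ, rfl⟩
  exact dM_le_one (hS.2.2 b (hG₂ hb)) (hS.isDensity_run hβ hS.1)
    (hS.isDensity_run (hβ.purge G₁ D) hS.1)

end QSystem

theorem Rx_mem_unitary (θ : ℝ) : Rx θ ∈ unitary (Matrix (Fin 2) (Fin 2) ℂ) := by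
  rw [mem_unitaryGroup_iff']
  have h : (Real.cos (θ / 2) : ℂ) ^ 2 + (Real.sin (θ / 2) : ℂ) ^ 2 = 1 := by
    exact_mod_cast Real.cos_sq_add_sin_sq _
  ext i j
  fin_cases i <;> fin_cases j <;>
    simp [Rx, mul_apply, Fin.sum_univ_two, -Complex.ofReal_cos, -Complex.ofReal_sin] <;>
    first
    | ring1
    | linear_combination h - (Real.sin (θ / 2) : ℂ) ^ 2 * Complex.I_sq

theorem CNOT_mem_unitary : CNOT ∈ unitary (Matrix (Fin 2 × Fin 2) (Fin 2 × Fin 2) ℂ) := by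
  rw [mem_unitaryGroup_iff']
  ext ⟨a, b⟩ ⟨c, e⟩
  fin_cases a <;> fin_cases b <;> fin_cases c <;> fin_cases e <;>
    simp [CNOT, mul_apply, Fintype.sum_prod_type, Fin.sum_univ_two, one_apply, Prod.ext_iff]

theorem proj_posSemidef (i : Fin 2) : (proj i).PosSemidef := by
  rw [proj, ← diagonal_single, posSemidef_diagonal_iff]
  exact Pi.single_nonneg.2 zero_le_one

theorem sum_proj : ∑ i, proj i = 1 := by
  ext i j
  fin_cases i <;> fin_cases j <;> simp [proj, Fin.sum_univ_two, one_apply]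

theorem measFst_isPOVM : measFst.IsPOVM := by
  refine ⟨fun i => (proj_posSemidef i).kronecker PosSemidef.one, ?_⟩
  show ∑ i, proj i ⊗ₖ 1 = 1
  rw [Fin.sum_univ_two, ← add_kronecker, ← Fin.sum_univ_two proj, sum_proj, one_kronecker_one]

theorem measSnd_isPOVM : measSnd.IsPOVM := by
  refine ⟨fun i => PosSemidef.one.kronecker (proj_posSemidef i), ?_⟩
  show ∑ i, 1 ⊗ₖ proj i = 1
  rw [Fin.sum_univ_two, ← kronecker_add, ← Fin.sum_univ_two proj, sum_proj, one_kronecker_one]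

theorem star_ket00_dotProduct_ket00 : star ket00 ⬝ᵥ ket00 = 1 := by
  simp [dotProduct, ket00]

theorem twoQubitSys_wellFormed (θ : ℝ) : (twoQubitSys θ).WellFormed := by
  refine ⟨isDensity_vecMulVec star_ket00_dotProduct_ket00, ?_, ?_⟩
  · rintro (_ | _) - (_ | _) -
    · exact isSuperOp_conjOp (kronecker_mem_unitary (Rx_mem_unitary θ) (one_mem _))
    · exact isSuperOp_conjOp CNOT_mem_unitary
    · exact isSuperOp_conjOp (kronecker_mem_unitary (one_mem _) (Rx_mem_unitary θ))
    · exact isSuperOp_conjOp CNOT_mem_unitary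
  · rintro (_ | _) - P rfl
    · exact measFst_isPOVM
    · exact measSnd_isPOVM

def rxCnotKet (θ : ℝ) : Fin 2 × Fin 2 → ℂ := fun p =>
  if p = (0, 0) then Real.cos (θ / 2) else if p = (1, 1) then -Complex.I * Real.sin (θ / 2) else 0

theorem CNOT_mulVec_ket00 : CNOT *ᵥ ket00 = ket00 := by
  ext ⟨a, b⟩
  fin_cases a <;> fin_cases b <;>
    simp [mulVec, dotProduct, CNOT, ket00, Fintype.sum_prod_type, Fin.sum_univ_two, Prod.ext_iff]

theorem CNOT_mulVec_Rx_kronecker_one_mulVec_ket00 (θ : ℝ) :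
    CNOT *ᵥ ((Rx θ ⊗ₖ 1) *ᵥ ket00) = rxCnotKet θ := by
  ext ⟨a, b⟩
  fin_cases a <;> fin_cases b <;>
    simp [mulVec, dotProduct, CNOT, Rx, ket00, rxCnotKet, one_apply, Fintype.sum_prod_type,
      Fin.sum_univ_two, Prod.ext_iff, -Complex.ofReal_cos, -Complex.ofReal_sin]

theorem run_alice_rx_cnot (θ : ℝ) :
    (twoQubitSys θ).run [(Ag.alice, Cm.rx), (Ag.alice, Cm.cnot)] (twoQubitSys θ).ρ0 =
      vecMulVec (rxCnotKet θ) (star (rxCnotKet θ)) := by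
  simp only [QSystem.run, List.foldl, twoQubitSys]
  rw [conjOp_vecMulVec, conjOp_vecMulVec, CNOT_mulVec_Rx_kronecker_one_mulVec_ket00]

theorem run_alice_cnot (θ : ℝ) :
    (twoQubitSys θ).run [(Ag.alice, Cm.cnot)] (twoQubitSys θ).ρ0 =
      vecMulVec ket00 (star ket00) := by
  simp only [QSystem.run, List.foldl, twoQubitSys]
  rw [conjOp_vecMulVec, CNOT_mulVec_ket00]

theorem trace_measSnd_mul_vecMulVec (v : Fin 2 × Fin 2 → ℂ) (i : Fin 2) :
    (measSnd.E i * vecMulVec v (star v)).trace =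
      ((‖v (0, i)‖ ^ 2 + ‖v (1, i)‖ ^ 2 : ℝ) : ℂ) := by
  fin_cases i <;>
    simp [measSnd, proj, trace, mul_apply, single, one_apply, Fintype.sum_prod_type,
      Fin.sum_univ_two, vecMulVec_apply, Complex.mul_conj, Complex.normSq_eq_norm_sq]

theorem dE_measSnd_rxCnotKet_ket00 (θ : ℝ) :
    dE measSnd (vecMulVec (rxCnotKet θ) (star (rxCnotKet θ))) (vecMulVec ket00 (star ket00)) =
      Real.sin (θ / 2) ^ 2 := by
  have hcos : Real.cos (θ / 2) ^ 2 - 1 = -Real.sin (θ / 2) ^ 2 := by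
    linarith [Real.sin_sq_add_cos_sq (θ / 2)]
  change (1 / 2) * ∑ i : Fin 2, _ = _
  simp only [Fin.sum_univ_two, trace_measSnd_mul_vecMulVec, ← Complex.ofReal_sub,
    Complex.norm_real, Real.norm_eq_abs, rxCnotKet, ket00]
  simp [-Complex.ofReal_cos, -Complex.ofReal_sin, hcos]
  ring

/-- **Claim 3 of Example 3.1.** In the two-qubit system, Alice with the command
`R_x(θ)` interferes with Bob by at least `sin²(θ/2)`:
`Int({Alice}, {R_x(θ)} | {Bob}) ≥ sin²(θ/2)`; in particular for `0 < θ < 2π` the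
interference degree is strictly positive. -/
theorem alice_rx_interferes_with_bob (θ : ℝ) :
    Real.sin (θ / 2) ^ 2 ≤ IntDeg (twoQubitSys θ) {Ag.alice} {Cm.rx} {Ag.bob} ∧
    (0 < θ → θ < 2 * Real.pi →
      0 < IntDeg (twoQubitSys θ) {Ag.alice} {Cm.rx} {Ag.bob}) := by
  have hle : Real.sin (θ / 2) ^ 2 ≤ IntDeg (twoQubitSys θ) {Ag.alice} {Cm.rx} {Ag.bob} := by
    have h := (twoQubitSys_wellFormed θ).dM_le_intDeg (Set.subset_univ {Ag.bob}) {Ag.alice}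
      {Cm.rx} (Set.mem_singleton Ag.bob) (α := [(Ag.alice, Cm.rx), (Ag.alice, Cm.cnot)])
      fun _ _ => ⟨trivial, trivial⟩
    rwa [show purge {Ag.alice} {Cm.rx} [(Ag.alice, Cm.rx), (Ag.alice, Cm.cnot)] =
        [(Ag.alice, Cm.cnot)] by simp [purge], run_alice_rx_cnot, run_alice_cnot,
      show (twoQubitSys θ).M Ag.bob = {measSnd} from rfl, dM_singleton,
      dE_measSnd_rxCnotKet_ket00] at h
  refine ⟨hle, fun h0 h2π => lt_of_lt_of_le ?_ hle⟩
  exact pow_pos (Real.sin_pos_of_pos_of_lt_pi (by positivity) (by linarith)) 2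

end
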